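/- Let H be a β-acyclic hypergraph with β-elimination order, let x, y be consecutive vertices in the order with y < x (y the predecessor of x), and let e ∈ H with x ∉ e. Then H_e^x = H_e^y. -/

import Mathlib

variable {V : Type*} [LinearOrder V]

/-- The colexicographic order on edges: `e <_H f` iff `max (e Δ f) ∈ f`. -/
def edgeLT (e f : Finset V) : Prop :=
  ∃ hne : (symmDiff e f).Nonempty, (symmDiff e f).max' hne ∈ f

def edgeLE (e f : Finset V) : Prop := e = f ∨ edgeLT e f

/-- The linear order on `V` is a β-elimination order for the hypergraph `H`. -/
def IsBetaElim (H : Finset (Finset V)) : Prop :=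
  ∀ x : V, ∀ e ∈ H, ∀ f ∈ H, x ∈ e → x ∈ f →
    (e.filter fun y => x < y) ⊆ f ∨ (f.filter fun y => x < y) ⊆ e

/-- A walk starting at edge `e` and continuing through the vertex/edge pairs in `p`. -/
def WalkAux (H : Finset (Finset V)) : Finset V → List (V × Finset V) → Prop
  | _, [] => True
  | e, (x, f) :: p => x ∈ e ∧ x ∈ f ∧ f ∈ H ∧ WalkAux H f p

def lastEdge (e : Finset V) (p : List (V × Finset V)) : Finset V :=
  (p.map Prod.snd).getLastD e

/-- `p` is a walk from edge `e` to edge `f` in `H`. -/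
def IsWalk (H : Finset (Finset V)) (e f : Finset V) (p : List (V × Finset V)) : Prop :=
  e ∈ H ∧ WalkAux H e p ∧ lastEdge e p = f

/-- A path: a walk with pairwise distinct edges and pairwise distinct vertices. -/
def IsPath (H : Finset (Finset V)) (e f : Finset V) (p : List (V × Finset V)) : Prop :=
  IsWalk H e f p ∧ (e :: p.map Prod.snd).Nodup ∧ (p.map Prod.fst).Nodup

/-- `f ∈ H_e^x`: there is a walk from `f` to `e` using only edges `≤_H e` and
vertices `≤ x`. -/
def memHex (H : Finset (Finset V)) (e : Finset V) (x : V) (f : Finset V) : Prop :=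
  ∃ p, IsWalk H f e p ∧ edgeLE f e ∧ ∀ q ∈ p, edgeLE q.2 e ∧ q.1 ≤ x

/-!
A walk to `e` through edges `≤_H e` and vertices `< z` can be made ascending in `≤_H`: an edge
that is `≤_H` both of its neighbours can be skipped, because β-elimination puts the larger of
its two connecting vertices into both neighbours. Along an ascending walk β-elimination pushes a
vertex `z` of the first edge into every later edge, so `z ∈ e`. If `x ∉ e` occurred on a walk
witnessing `f ∈ H_e^x`, the part of the walk after its last occurrence would lead from an edge
containing `x` to `e` through vertices `< x`, forcing `x ∈ e`; so all its vertices are `< x`,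
that is, `≤ y`.
-/

@[simp]
lemma lastEdge_cons {α : Type*} (e f : Finset α) (v : α) (p : List (α × Finset α)) :
    lastEdge e ((v, f) :: p) = lastEdge f p :=
  List.getLastD_cons

lemma edgeLE_total (e f : Finset V) : edgeLE e f ∨ edgeLE f e := by
  by_cases h : e = f
  · exact Or.inl (Or.inl h)
  have hne : (symmDiff e f).Nonempty := by
    rw [Finset.nonempty_iff_ne_empty]
    simpa [symmDiff_eq_bot] using h
  rcases Finset.mem_symmDiff.1 (Finset.max'_mem _ hne) with ⟨hmax, -⟩ | ⟨hmax, -⟩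
  · exact Or.inr (Or.inr ⟨symmDiff_comm f e ▸ hne, by simpa only [symmDiff_comm f e] using hmax⟩)
  · exact Or.inl (Or.inr ⟨hne, hmax⟩)

variable {H : Finset (Finset V)}

/-- The other alternative of β-elimination at `v`, `g_{>v} ⊆ f`, would put `max (f Δ g) ∈ g`
into `f`. -/
lemma IsBetaElim.mem_of_edgeLE (hβ : IsBetaElim H) {f g : Finset V} (hf : f ∈ H) (hg : g ∈ H)
    (hfg : edgeLE f g) {v u : V} (hvf : v ∈ f) (hvg : v ∈ g) (huf : u ∈ f) (hvu : v ≤ u) :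
    u ∈ g := by
  rcases hvu.eq_or_lt with rfl | hvu
  · exact hvg
  rcases hfg with rfl | ⟨hne, hmax⟩
  · exact huf
  rcases hβ v f hf g hg hvf hvg with hsub | hsub
  · exact hsub (Finset.mem_filter.2 ⟨huf, hvu⟩)
  by_contra hug
  have hu_le : u ≤ (symmDiff f g).max' hne :=
    Finset.le_max' _ _ (Finset.mem_symmDiff.2 (Or.inl ⟨huf, hug⟩))
  have hmax_f : (symmDiff f g).max' hne ∈ f :=
    hsub (Finset.mem_filter.2 ⟨hmax, hvu.trans_le hu_le⟩)
  rcases Finset.mem_symmDiff.1 (Finset.max'_mem _ hne) with ⟨-, hng⟩ | ⟨-, hnf⟩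
  · exact hng hmax
  · exact hnf hmax_f

lemma IsBetaElim.max_mem_inter (hβ : IsBetaElim H) {g h k : Finset V} (hg : g ∈ H)
    (hh : h ∈ H) (hk : k ∈ H) (hhg : edgeLE h g) (hhk : edgeLE h k) {v u : V}
    (hvh : v ∈ h) (hvg : v ∈ g) (huh : u ∈ h) (huk : u ∈ k) : max v u ∈ g ∩ k := by
  rw [Finset.mem_inter]
  rcases le_total v u with hvu | huv
  · rw [max_eq_right hvu]
    exact ⟨hβ.mem_of_edgeLE hh hg hhg hvh hvg huh hvu, huk⟩
  · rw [max_eq_left huv]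
    exact ⟨hvg, hβ.mem_of_edgeLE hh hk hhk huh huk hvh huv⟩

def IsAscendingWalk (H : Finset (Finset V)) (g : Finset V) (p : List (V × Finset V)) : Prop :=
  WalkAux H g p ∧ (g :: p.map Prod.snd).IsChain edgeLE

lemma isAscendingWalk_cons {g h : Finset V} {v : V} {p : List (V × Finset V)} :
    IsAscendingWalk H g ((v, h) :: p) ↔
      v ∈ g ∧ v ∈ h ∧ h ∈ H ∧ edgeLE g h ∧ IsAscendingWalk H h p := by
  simp only [IsAscendingWalk, WalkAux, List.map_cons, List.isChain_cons_cons]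
  tauto

lemma IsBetaElim.mem_lastEdge_of_isAscendingWalk (hβ : IsBetaElim H) {z : V} :
    ∀ {g : Finset V} {p : List (V × Finset V)}, g ∈ H → IsAscendingWalk H g p →
      (∀ q ∈ p, q.1 < z) → z ∈ g → z ∈ lastEdge g p
  | _, [], _, _, _, hz => hz
  | g, (v, h) :: p, hg, hp, hlt, hz => by
    obtain ⟨hvg, hvh, hh, hgh, hp⟩ := isAscendingWalk_cons.1 hp
    rw [lastEdge_cons]
    refine hβ.mem_lastEdge_of_isAscendingWalk hh hp (fun q hq => hlt q (.tail _ hq)) ?_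
    exact hβ.mem_of_edgeLE hg hh hgh hvg hvh hz (hlt _ (.head _)).le

/-- Every leading edge of the ascending walk that lies below `g` is a local minimum of the
prepended walk and is skipped. -/
lemma IsBetaElim.exists_isAscendingWalk_cons (hβ : IsBetaElim H) {z : V} :
    ∀ {g h : Finset V} {v : V} {p : List (V × Finset V)}, g ∈ H → h ∈ H → v ∈ g → v ∈ h →
      v < z → IsAscendingWalk H h p → (∀ q ∈ p, q.1 < z) → edgeLE g (lastEdge h p) →
      ∃ p', IsAscendingWalk H g p' ∧ lastEdge g p' = lastEdge h p ∧ ∀ q ∈ p', q.1 < z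
  | g, h, v, [], _, hh, hvg, hvh, hvz, _, _, hgh =>
    ⟨[(v, h)], isAscendingWalk_cons.2 ⟨hvg, hvh, hh, hgh, trivial, .singleton _⟩, rfl,
      by simpa using hvz⟩
  | g, h, v, (u, k) :: p, hg, hh, hvg, hvh, hvz, hp, hlt, hge => by
    rcases edgeLE_total g h with hgh | hhg
    · exact ⟨(v, h) :: (u, k) :: p, isAscendingWalk_cons.2 ⟨hvg, hvh, hh, hgh, hp⟩, rfl,
        List.forall_mem_cons.2 ⟨hvz, hlt⟩⟩
    obtain ⟨huh, huk, hk, hhk, hp⟩ := isAscendingWalk_cons.1 hp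
    obtain ⟨hwg, hwk⟩ := Finset.mem_inter.1 (hβ.max_mem_inter hg hh hk hhg hhk hvh hvg huh huk)
    have huz : u < z := hlt _ (.head _)
    rw [lastEdge_cons] at hge ⊢
    exact hβ.exists_isAscendingWalk_cons hg hk hwg hwk (max_lt hvz huz) hp
      (fun q hq => hlt q (.tail _ hq)) hge

lemma IsBetaElim.exists_isAscendingWalk (hβ : IsBetaElim H) {e : Finset V} {z : V} :
    ∀ {g : Finset V} {p : List (V × Finset V)}, g ∈ H → WalkAux H g p → edgeLE g e →
      (∀ q ∈ p, edgeLE q.2 e ∧ q.1 < z) → lastEdge g p = e →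
      ∃ p', IsAscendingWalk H g p' ∧ lastEdge g p' = e ∧ ∀ q ∈ p', q.1 < z
  | _, [], _, _, _, _, hlast => ⟨[], ⟨trivial, .singleton _⟩, hlast, by simp⟩
  | g, (v, h) :: p, hg, ⟨hvg, hvh, hh, hp⟩, hge, hq, hlast => by
    obtain ⟨⟨hhe, hvz⟩, hq⟩ := List.forall_mem_cons.1 hq
    rw [lastEdge_cons] at hlast
    obtain ⟨p', hp', rfl, hlt'⟩ := hβ.exists_isAscendingWalk hh hp hhe hq hlast
    exact hβ.exists_isAscendingWalk_cons hg hh hvg hvh hvz hp' hlt' hge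

lemma IsBetaElim.mem_of_walk (hβ : IsBetaElim H) {e g : Finset V} {p : List (V × Finset V)}
    {z : V} (hg : g ∈ H) (hp : WalkAux H g p) (hge : edgeLE g e)
    (hq : ∀ q ∈ p, edgeLE q.2 e ∧ q.1 < z) (hlast : lastEdge g p = e) (hz : z ∈ g) : z ∈ e := by
  obtain ⟨p', hp', rfl, hlt'⟩ := hβ.exists_isAscendingWalk hg hp hge hq hlast
  exact hβ.mem_lastEdge_of_isAscendingWalk hg hp' hlt' hz

lemma IsBetaElim.lt_of_walk_of_not_mem (hβ : IsBetaElim H) {e : Finset V} {x : V}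
    (hxe : x ∉ e) : ∀ {g : Finset V} {p : List (V × Finset V)}, WalkAux H g p →
      lastEdge g p = e → (∀ q ∈ p, edgeLE q.2 e ∧ q.1 ≤ x) → ∀ q ∈ p, q.1 < x
  | _, [], _, _, _ => by simp
  | g, (v, h) :: p, ⟨_, hvh, hh, hp⟩, hlast, hq => by
    obtain ⟨⟨hhe, hvx⟩, hq⟩ := List.forall_mem_cons.1 hq
    rw [lastEdge_cons] at hlast
    have hlt := hβ.lt_of_walk_of_not_mem hxe hp hlast hq
    refine List.forall_mem_cons.2 ⟨hvx.lt_of_ne ?_, hlt⟩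
    rintro rfl
    exact hxe (hβ.mem_of_walk hh hp hhe (fun q hq' => ⟨(hq q hq').1, hlt q hq'⟩) hlast hvh)

theorem hex_skip_vertex_general {V : Type*} [LinearOrder V] (H : Finset (Finset V))
    (hβ : IsBetaElim H) (x y : V) (hyx : y < x)
    (hpred : ∀ z : V, z < x → z ≤ y)
    (e : Finset V) (hxe : x ∉ e) :
    ∀ f, memHex H e x f ↔ memHex H e y f := by
  intro f
  constructor
  · rintro ⟨p, hp, hfe, hq⟩
    have hlt := hβ.lt_of_walk_of_not_mem hxe hp.2.1 hp.2.2 hq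
    exact ⟨p, hp, hfe, fun q hq' => ⟨(hq q hq').1, hpred _ (hlt q hq')⟩⟩
  · rintro ⟨p, hp, hfe, hq⟩
    exact ⟨p, hp, hfe, fun q hq' => ⟨(hq q hq').1, (hq q hq').2.trans hyx.le⟩⟩

theorem hex_skip_vertex {V : Type*} [LinearOrder V] (H : Finset (Finset V))
    (hβ : IsBetaElim H) (x y : V) (hyx : y < x)
    (hpred : ∀ z : V, z < x → z ≤ y)
    (e : Finset V) (he : e ∈ H) (hxe : x ∉ e) :
    ∀ f, memHex H e x f ↔ memHex H e y f :=
  hex_skip_vertex_general H hβ x y hyx hpred e hxe
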